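/- Let G be a Polish group and H ≤ G an open subgroup of finite index. Then H (with the subspace topology) is coarsely bounded if and only if G is coarsely bounded. -/

import Mathlib

open Pointwise

/-- A subset `A` of a topological group `G` is *coarsely bounded in `G`* if for every
neighborhood `V` of the identity there are a finite set `F ⊆ G` and an `n ≥ 1` with
`A ⊆ (F·V)ⁿ`. -/
def IsCBIn (G : Type*) [Group G] [TopologicalSpace G] (A : Set G) : Prop :=
  ∀ V ∈ nhds (1 : G), ∃ F : Set G, F.Finite ∧ ∃ n : ℕ, 1 ≤ n ∧ A ⊆ (F * V) ^ n

/-!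
Fix a finite right transversal `T ∋ 1` of `H`, so that `G = H·T`. If `H` is coarsely bounded,
so is its image in `G`, and multiplying by the finite set `T` costs one more letter per word.
Conversely, an identity neighbourhood `W` of `H` is one of `G` because `H` is open; choose `V`
so small that `t V t⁻¹ ⊆ W` for all `t ∈ T`. Writing each prefix of a word
`f₁v₁⋯fₖvₖ ∈ (F·V)ᵏ` as `hₖtₖ` with `hₖ ∈ H`, `tₖ ∈ T`, the Schreier rewriting
`hₖ₊₁ = hₖ · (tₖ fₖ₊₁ tₖ₊₁⁻¹) · (tₖ₊₁ vₖ₊₁ tₖ₊₁⁻¹)` turns every element of `H ∩ (F·V)ⁿ` into a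
word in `H` with letters from the finite set `H ∩ T F T⁻¹` and from `W`.
-/

open Set Filter Topology

namespace IsCBIn

variable {G : Type*} [Group G] [TopologicalSpace G]

theorem mono {A B : Set G} (hAB : A ⊆ B) (hB : IsCBIn G B) : IsCBIn G A := fun V hV ↦ by
  obtain ⟨F, hF, n, hn, hBF⟩ := hB V hV
  exact ⟨F, hF, n, hn, hAB.trans hBF⟩

theorem image {H : Type*} [Group H] [TopologicalSpace H] {A : Set H} (hA : IsCBIn H A)
    (φ : H →* G) (hφ : Continuous φ) : IsCBIn G (φ '' A) := fun V hV ↦ by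
  have hφV : φ ⁻¹' V ∈ 𝓝 (1 : H) := hφ.continuousAt.preimage_mem_nhds (by rwa [map_one])
  obtain ⟨F, hF, n, hn, hAF⟩ := hA _ hφV
  refine ⟨φ '' F, hF.image φ, n, hn, ?_⟩
  calc φ '' A ⊆ φ '' ((F * φ ⁻¹' V) ^ n) := image_mono hAF
    _ = (φ '' F * φ '' (φ ⁻¹' V)) ^ n := by rw [image_pow, image_mul]
    _ ⊆ (φ '' F * V) ^ n := by gcongr; exact image_preimage_subset φ V

theorem mul_finite {A T : Set G} (hA : IsCBIn G A) (hT : T.Finite) : IsCBIn G (A * T) :=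
  fun V hV ↦ by
    obtain ⟨F, hF, n, -, hAF⟩ := hA V hV
    have hT_sub : T ⊆ (F ∪ T) * V := fun t ht ↦
      ⟨t, subset_union_right ht, 1, mem_of_mem_nhds hV, mul_one t⟩
    refine ⟨F ∪ T, hF.union hT, n + 1, by omega, ?_⟩
    rw [pow_succ]
    exact mul_subset_mul (hAF.trans (pow_subset_pow_left (mul_subset_mul subset_union_left
      subset_rfl))) hT_sub

end IsCBIn

namespace Subgroup

variable {G : Type*} [Group G] (H : Subgroup G) {T F V W : Set G}

theorem mul_inv_mem_pow_of_mem_pow (hHT : (H : Set G) * T = univ)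
    (hTVW : ∀ t ∈ T, ∀ v ∈ V, t * v * t⁻¹ ∈ W) (hWH : W ⊆ H) (h1T : 1 ∈ T) (h1F : 1 ∈ F)
    (h1W : 1 ∈ W) (m : ℕ) :
    ∀ g ∈ (F * V) ^ m, ∀ t ∈ T, g * t⁻¹ ∈ H →
      g * t⁻¹ ∈ ((T * F * T⁻¹ ∩ H) * W) ^ (m + 1) := by
  induction m with
  | zero =>
    rintro g hg t ht hgt
    obtain rfl : g = 1 := by simpa using hg
    rw [one_mul] at hgt ⊢
    rw [zero_add, pow_one]
    have ht_inv : t⁻¹ ∈ T * F * T⁻¹ := by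
      simpa using Set.mul_mem_mul (Set.mul_mem_mul h1T h1F) (inv_mem_inv.2 ht)
    simpa using Set.mul_mem_mul (show t⁻¹ ∈ T * F * T⁻¹ ∩ (H : Set G) from ⟨ht_inv, hgt⟩) h1W
  | succ m ih =>
    rintro _ ⟨g, hg, _, ⟨f, hf, v, hv, rfl⟩, rfl⟩ t ht hgt
    obtain ⟨h, hh, t', ht', rfl⟩ : g ∈ (H : Set G) * T := hHT ▸ mem_univ g
    have hIH : h ∈ ((T * F * T⁻¹ ∩ H) * W) ^ (m + 1) := by
      simpa using ih _ hg t' ht' (by simpa using hh)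
    have hvW : t * v * t⁻¹ ∈ W := hTVW t ht v hv
    have hfH : t' * f * t⁻¹ ∈ H := by
      have : t' * f * t⁻¹ = h⁻¹ * (h * t' * (f * v) * t⁻¹) * (t * v * t⁻¹)⁻¹ := by group
      rw [this]
      exact H.mul_mem (H.mul_mem (H.inv_mem hh) hgt) (H.inv_mem (hWH hvW))
    have hf' : t' * f * t⁻¹ ∈ T * F * T⁻¹ ∩ H :=
      ⟨Set.mul_mem_mul (Set.mul_mem_mul ht' hf) (inv_mem_inv.2 ht), hfH⟩
    have : h * t' * (f * v) * t⁻¹ = h * ((t' * f * t⁻¹) * (t * v * t⁻¹)) := by group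
    rw [this, pow_succ]
    exact Set.mul_mem_mul hIH (Set.mul_mem_mul hf' hvW)

end Subgroup

theorem IsCBIn.of_image_subtype {G : Type*} [Group G] [TopologicalSpace G] [ContinuousMul G]
    {H : Subgroup G} [H.FiniteIndex] (hH : IsOpen (H : Set G)) {A : Set H}
    (hA : IsCBIn G (Subtype.val '' A)) : IsCBIn H A := by
  intro W₀ hW₀
  obtain ⟨T, hT, h1T⟩ := H.exists_isComplement_right 1
  set W : Set G := Subtype.val '' W₀
  have hW : W ∈ 𝓝 1 := hH.isOpenMap_subtype_val.image_mem_nhds hW₀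
  have hV : {v | ∀ t ∈ T, t * v * t⁻¹ ∈ W} ∈ 𝓝 (1 : G) :=
    hT.finite_right.eventually_all.2 fun t _ ↦
      ((continuous_const.mul continuous_id).mul continuous_const).tendsto' 1 1 (by simp) hW
  obtain ⟨F, hF, n, -, hAF⟩ := hA _ hV
  refine ⟨Subtype.val ⁻¹' (T * insert 1 F * T⁻¹),
    ((hT.finite_right.mul (hF.insert 1)).mul hT.finite_right.inv).preimage
      Subtype.val_injective.injOn, n + 1, by omega, fun x hx ↦ ?_⟩
  have hxG := H.mul_inv_mem_pow_of_mem_pow (V := {v | ∀ t ∈ T, t * v * t⁻¹ ∈ W}) hT.mul_eq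
    (fun t ht v hv ↦ hv t ht) (fun _ ⟨y, _, hy⟩ ↦ hy ▸ y.2) h1T (mem_insert 1 F)
    ⟨1, mem_of_mem_nhds hW₀, rfl⟩ n x
    (pow_subset_pow_left (mul_subset_mul (subset_insert 1 F) subset_rfl) (hAF ⟨x, hx, rfl⟩))
    1 h1T (by simp)
  rw [inv_one, mul_one, inter_comm, ← Subtype.image_preimage_coe] at hxG
  have hx_image :
      (x : G) ∈ H.subtype '' ((Subtype.val ⁻¹' (T * insert 1 F * T⁻¹) * W₀) ^ (n + 1)) := by
    rwa [image_pow, image_mul]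
  exact Subtype.val_injective.mem_set_image.1 hx_image

theorem finiteIndex_open_subgroup_cb_iff_general {G : Type*} [Group G] [TopologicalSpace G]
    [IsTopologicalGroup G]
    (H : Subgroup G) (hopen : IsOpen (H : Set G)) (hfi : H.index ≠ 0) :
    IsCBIn H (Set.univ : Set H) ↔ IsCBIn G (Set.univ : Set G) := by
  have : H.FiniteIndex := Subgroup.finiteIndex_iff.2 hfi
  refine ⟨fun hH ↦ ?_, fun hG ↦ IsCBIn.of_image_subtype hopen (hG.mono (subset_univ _))⟩
  obtain ⟨T, hT, -⟩ := H.exists_isComplement_right 1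
  have hHT := (hH.image H.subtype continuous_subtype_val).mul_finite hT.finite_right
  rwa [image_univ, H.coe_subtype, Subtype.range_coe, hT.mul_eq] at hHT

/-- Let `G` be a Polish group and `H ≤ G` an open subgroup of finite index.  Then `H`
(with the subspace topology) is coarsely bounded if and only if `G` is. -/
theorem finiteIndex_open_subgroup_cb_iff {G : Type*} [Group G] [TopologicalSpace G]
    [IsTopologicalGroup G] [PolishSpace G]
    (H : Subgroup G) (hopen : IsOpen (H : Set G)) (hfi : H.index ≠ 0) :
    IsCBIn H (Set.univ : Set H) ↔ IsCBIn G (Set.univ : Set G) :=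
  finiteIndex_open_subgroup_cb_iff_general H hopen hfi
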